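/- Let n ≥ 4 be an even integer and let a, b be real numbers with a² < 4b. Let P(t) denote the discriminant of xⁿ + t(x² + ax + b) with respect to x, regarded as a polynomial in t, and let α = max{ α ∈ ℝ : P(α) = 0 } be the largest real root of P. Then for every real number t > α, the polynomial xⁿ + t(x² + ax + b) has no real roots. -/

import Mathlib

/-!
At `t = 0` the polynomial is `Xⁿ`, whose discriminant vanishes because `0` is a multiple root;
hence `0 ≤ α`. For `t > 0` and even `n`, `xⁿ ≥ 0` while `x² + a x + b > 0` by `a² < 4b`, so
`xⁿ + t (x² + a x + b)` is positive on all of `ℝ`.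
-/

open Polynomial

/-- The discriminant of a real polynomial `f` of degree `n` with leading coefficient `c`,
computed via the formula `Δ(f) = (−1)^{n(n−1)/2} · Res(f, f′) / c
= (−1)^{n(n−1)/2} · c^{n−2} · ∏_{f(r)=0} f′(r)`, the product running over the roots of `f`
(with multiplicity) in the algebraic closure `ℂ`. -/
noncomputable def polyDisc (f : Polynomial ℝ) : ℂ :=
  (-1 : ℂ) ^ (f.natDegree * (f.natDegree - 1) / 2) *
    ((algebraMap ℝ ℂ) f.leadingCoeff) ^ (f.natDegree - 2) *
    (((f.map (algebraMap ℝ ℂ)).roots).map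
      fun z => Polynomial.eval z (Polynomial.derivative (f.map (algebraMap ℝ ℂ)))).prod

lemma polyDisc_eq_zero_of_isRoot_derivative {f : ℝ[X]} (hf : f ≠ 0) {z : ℂ}
    (hz : (f.map (algebraMap ℝ ℂ)).IsRoot z)
    (hz' : (derivative (f.map (algebraMap ℝ ℂ))).IsRoot z) :
    polyDisc f = 0 := by
  have hroot : z ∈ (f.map (algebraMap ℝ ℂ)).roots :=
    (mem_roots (Polynomial.map_ne_zero hf)).mpr hz
  have hzero : (0 : ℂ) ∈ (f.map (algebraMap ℝ ℂ)).roots.map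
      fun w => eval w (derivative (f.map (algebraMap ℝ ℂ))) :=
    Multiset.mem_map.mpr ⟨z, hroot, hz'⟩
  rw [polyDisc, Multiset.prod_eq_zero hzero, mul_zero]

lemma polyDisc_X_pow {n : ℕ} (hn : 2 ≤ n) : polyDisc (X ^ n : ℝ[X]) = 0 := by
  refine polyDisc_eq_zero_of_isRoot_derivative (pow_ne_zero n X_ne_zero) (z := 0) ?_ ?_
  · simp [zero_pow (by omega : n ≠ 0)]
  · simp [derivative_X_pow, zero_pow (by omega : n - 1 ≠ 0)]

lemma quadratic_pos_of_sq_lt {a b : ℝ} (hab : a ^ 2 < 4 * b) (x : ℝ) :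
    0 < x ^ 2 + a * x + b := by
  nlinarith [sq_nonneg (2 * x + a)]

lemma even_pow_add_mul_quadratic_pos {n : ℕ} (hn : Even n) {a b t : ℝ} (hab : a ^ 2 < 4 * b)
    (ht : 0 < t) (x : ℝ) : 0 < x ^ n + t * (x ^ 2 + a * x + b) :=
  add_pos_of_nonneg_of_pos (hn.pow_nonneg x) (mul_pos ht (quadratic_pos_of_sq_lt hab x))

/-- For even `n ≥ 4` and `a² < 4b`: if `α` is the largest real root of the discriminant
`P(t)` of `xⁿ + t(x² + ax + b)` (as a polynomial in `t`), then for every `t > α` the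
polynomial `xⁿ + t(x² + ax + b)` has no real roots. -/
theorem quadrinomial_no_real_roots_beyond_largest_disc_root
    (n : ℕ) (hn : 4 ≤ n) (hne : Even n) (a b : ℝ) (hab : a ^ 2 < 4 * b)
    (P : ℝ → ℂ) (hP : ∀ u : ℝ, P u = polyDisc (X ^ n + C u * (X ^ 2 + C a * X + C b)))
    (α : ℝ) (hα : IsGreatest {u : ℝ | P u = 0} α) :
    ∀ t : ℝ, α < t → ∀ x : ℝ, x ^ n + t * (x ^ 2 + a * x + b) ≠ 0 := by
  intro t ht x
  have hP0 : P 0 = 0 := by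
    rw [hP, C_0, zero_mul, add_zero]
    exact polyDisc_X_pow (by omega)
  have hα0 : 0 ≤ α := hα.2 hP0
  exact (even_pow_add_mul_quadratic_pos hne hab (hα0.trans_lt ht) x).ne'
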